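/- arXiv:1703.08731 — 3 statements merged into one kernel-verified Lean document; each statement's English description precedes it below -/
import Mathlib

section
/- Let X be a Polish space, A ⊆ C(X) a pointwise bounded family of continuous functions, and suppose every sequence in A has a pointwise convergent subsequence (with limit in ℝ^X). Then every function in the closure of A in ℝ^X (pointwise topology) is of Baire class 1, i.e., is a pointwise limit of a sequence of continuous functions on X. -/
/-!
Fix `ψ` in the pointwise closure of `A` and `p < r₁ < r₂ < q`. If some nonempty set `F` had both
`{ψ ≤ p}` and `{ψ ≥ q}` dense in it, then, approximating `ψ` on finitely many points of `F` at a
time, one builds `fₙ ∈ A` and a Cantor tree of open sets in which every branch `α : ℕ → Bool`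
closes down on a point where `fₙ > r₂` or `fₙ < r₁` according to `αₙ`. The branch alternating
along any subsequence defeats pointwise convergence, contradicting the hypothesis. So on no
nonempty closed set are both level sets dense; a Lindelöf argument turns this into `Fσ`-ness of
`{ψ > a}` and `{ψ < b}`, and by the Lebesgue–Hausdorff theorem a function whose preimages of open
intervals are `Fσ` is of Baire class one.
-/

open Filter Function Topology Set Metric

section

variable {X : Type*}

section Fσ

variable [TopologicalSpace X]

/-- `Fσ` sets, encoded as complements of `Gδ` sets so that Mathlib's `Gδ` API applies. -/
def IsFσ (s : Set X) : Prop := IsGδ sᶜ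

theorem IsClosed.isFσ {s : Set X} (hs : IsClosed s) : IsFσ s := hs.isOpen_compl.isGδ

theorem IsOpen.isFσ [PerfectlyNormalSpace X] {s : Set X} (hs : IsOpen s) : IsFσ s :=
  hs.isClosed_compl.isGδ

theorem IsFσ.union {s t : Set X} (hs : IsFσ s) (ht : IsFσ t) : IsFσ (s ∪ t) := by
  simpa only [IsFσ, compl_union] using IsGδ.inter hs ht

theorem IsFσ.inter {s t : Set X} (hs : IsFσ s) (ht : IsFσ t) : IsFσ (s ∩ t) := by
  simpa only [IsFσ, compl_inter] using IsGδ.union hs ht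

theorem IsFσ.iUnion {ι : Sort*} [Countable ι] {s : ι → Set X} (hs : ∀ i, IsFσ (s i)) :
    IsFσ (⋃ i, s i) := by
  simpa only [IsFσ, compl_iUnion] using IsGδ.iInter hs

theorem IsFσ.biUnion {ι : Type*} {I : Set ι} (hI : I.Countable) {s : ι → Set X}
    (hs : ∀ i ∈ I, IsFσ (s i)) : IsFσ (⋃ i ∈ I, s i) := by
  simpa only [IsFσ, compl_iUnion₂] using IsGδ.biInter hI hs

theorem IsFσ.exists_eq_iUnion_isClosed {s : Set X} (hs : IsFσ s) :
    ∃ C : ℕ → Set X, (∀ n, IsClosed (C n)) ∧ s = ⋃ n, C n := by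
  obtain ⟨U, hU, hsU⟩ := isGδ_iff_eq_iInter_nat.1 hs
  refine ⟨fun n => (U n)ᶜ, fun n => (hU n).isClosed_compl, ?_⟩
  rw [← compl_iInter, ← hsU, compl_compl]

/-- The open sets `V` for which `V ∩ U` is covered by an `Fσ` set missing `L` are closed under
unions; their union `G` is a countable subunion, hence again such a set, and a point of the closed
set `Gᶜ` at which `L` or `U` fails to be dense in `Gᶜ` has a neighbourhood that could be added. -/
theorem exists_isFσ_superset_disjoint [PerfectlyNormalSpace X] [SecondCountableTopology X]
    {L U : Set X}
    (h : ∀ F, IsClosed F → F.Nonempty → ¬(F ⊆ closure (F ∩ L) ∧ F ⊆ closure (F ∩ U))) :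
    ∃ S, IsFσ S ∧ U ⊆ S ∧ Disjoint S L := by
  set 𝒢 : Set (Set X) := {V | IsOpen V ∧ ∃ S, IsFσ S ∧ V ∩ U ⊆ S ∧ Disjoint S L}
  set G := ⋃₀ 𝒢
  have hGopen : IsOpen G := isOpen_sUnion fun V hV => hV.1
  obtain ⟨T, hTc, hT𝒢, hTG⟩ := TopologicalSpace.isOpen_sUnion_countable 𝒢 fun V hV => hV.1
  choose! S hSσ hSU hSL using fun V (hV : V ∈ T) => (hT𝒢 hV).2
  obtain ⟨S₀, hS₀σ, hS₀U, hS₀L⟩ : ∃ S, IsFσ S ∧ G ∩ U ⊆ S ∧ Disjoint S L := by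
    refine ⟨⋃ V ∈ T, S V, IsFσ.biUnion hTc hSσ, ?_, ?_⟩
    · rintro x ⟨hxG, hxU⟩
      obtain ⟨V, hVT, hxV⟩ : x ∈ ⋃₀ T := by rw [hTG]; exact hxG
      exact mem_biUnion hVT (hSU V hVT ⟨hxV, hxU⟩)
    · exact disjoint_iUnion₂_left.2 hSL
  suffices hG : G = univ from
    ⟨S₀, hS₀σ, fun x hx => hS₀U ⟨hG ▸ mem_univ x, hx⟩, hS₀L⟩
  by_contra hne
  have hsplit := h Gᶜ hGopen.isClosed_compl (nonempty_compl.2 hne)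
  simp only [not_and_or, not_subset, _root_.mem_closure_iff, not_forall,
    not_nonempty_iff_eq_empty, exists_prop] at hsplit
  have hgood : ∀ V, IsOpen V → V ∩ (Gᶜ ∩ L) = ∅ ∨ V ∩ (Gᶜ ∩ U) = ∅ → V ⊆ G := by
    intro V hV hVLU
    refine subset_union_left.trans (subset_sUnion_of_mem (show V ∪ G ∈ 𝒢 from
      ⟨hV.union hGopen, ?_⟩))
    rcases hVLU with hVL | hVU
    · refine ⟨S₀ ∪ (V ∩ Gᶜ), hS₀σ.union (hV.isFσ.inter hGopen.isClosed_compl.isFσ), ?_, ?_⟩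
      · rintro x ⟨hxVG, hxU⟩
        by_cases hxG : x ∈ G
        · exact Or.inl (hS₀U ⟨hxG, hxU⟩)
        · exact Or.inr ⟨hxVG.resolve_right hxG, hxG⟩
      · refine disjoint_union_left.2 ⟨hS₀L, disjoint_left.2 fun x hx hxL => ?_⟩
        exact (eq_empty_iff_forall_notMem.1 hVL) x ⟨hx.1, hx.2, hxL⟩
    · refine ⟨S₀, hS₀σ, ?_, hS₀L⟩
      rintro x ⟨hxVG, hxU⟩
      by_cases hxG : x ∈ G
      · exact hS₀U ⟨hxG, hxU⟩
      · exact absurd hVU (nonempty_iff_ne_empty.1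
          ⟨x, hxVG.resolve_right hxG, hxG, hxU⟩)
  rcases hsplit with ⟨x, hxG, V, hV, hxV, hVLU⟩ | ⟨x, hxG, V, hV, hxV, hVLU⟩
  · exact hxG (hgood V hV (Or.inl hVLU) hxV)
  · exact hxG (hgood V hV (Or.inr hVLU) hxV)

theorem isFσ_compl_of_forall_not_dense [PerfectlyNormalSpace X] [SecondCountableTopology X]
    {L : Set X} {U : ℕ → Set X} (hLU : Lᶜ ⊆ ⋃ n, U n)
    (h : ∀ n F, IsClosed F → F.Nonempty → ¬(F ⊆ closure (F ∩ L) ∧ F ⊆ closure (F ∩ U n))) :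
    IsFσ Lᶜ := by
  choose S hSσ hUS hSL using fun n => exists_isFσ_superset_disjoint (h n)
  convert IsFσ.iUnion hSσ using 1
  refine Subset.antisymm (hLU.trans (iUnion_mono hUS)) (iUnion_subset fun n => ?_)
  exact subset_compl_iff_disjoint_right.2 (hSL n)

theorem isFσ_preimage_Ioo_of_forall_not_dense [PerfectlyNormalSpace X]
    [SecondCountableTopology X] {ψ : X → ℝ}
    (h : ∀ p q, p < q → ∀ F, IsClosed F → F.Nonempty →
      ¬(F ⊆ closure (F ∩ {x | ψ x ≤ p}) ∧ F ⊆ closure (F ∩ {x | q ≤ ψ x})))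
    (a b : ℝ) : IsFσ (ψ ⁻¹' Ioo a b) := by
  have hpos (n : ℕ) : (0 : ℝ) < 1 / (n + 1) := by positivity
  have ha : IsFσ {x | ψ x ≤ a}ᶜ := by
    refine isFσ_compl_of_forall_not_dense (U := fun n => {x | a + 1 / (n + 1) ≤ ψ x}) ?_
      fun n => h _ _ (by linarith [hpos n])
    intro x (hx : ¬ψ x ≤ a)
    obtain ⟨n, hn⟩ := exists_nat_one_div_lt (sub_pos.2 (not_le.1 hx))
    exact mem_iUnion.2 ⟨n, show a + 1 / (n + 1) ≤ ψ x by linarith⟩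
  have hb : IsFσ {x | b ≤ ψ x}ᶜ := by
    refine isFσ_compl_of_forall_not_dense (U := fun n => {x | ψ x ≤ b - 1 / (n + 1)}) ?_
      fun n F hF hne hc => h _ _ (by linarith [hpos n]) F hF hne ⟨hc.2, hc.1⟩
    intro x (hx : ¬b ≤ ψ x)
    obtain ⟨n, hn⟩ := exists_nat_one_div_lt (sub_pos.2 (not_le.1 hx))
    exact mem_iUnion.2 ⟨n, show ψ x ≤ b - 1 / (n + 1) by linarith⟩
  convert ha.inter hb using 1
  ext x
  simp [not_le]

end Fσ

theorem max_neg_min_eq_self {c t : ℝ} (h : |t| ≤ c) : max (-c) (min c t) = t := by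
  rw [min_eq_right (abs_le.1 h).2, max_eq_right (abs_le.1 h).1]

theorem abs_max_neg_min_le {c : ℝ} (hc : 0 ≤ c) (t : ℝ) : |max (-c) (min c t)| ≤ c :=
  abs_le.2 ⟨le_max_left _ _, max_le (by linarith) (min_le_left _ _)⟩

section BaireClassOne

variable [TopologicalSpace X]

def IsBaireClassOne (ψ : X → ℝ) : Prop :=
  ∃ g : ℕ → X → ℝ, (∀ n, Continuous (g n)) ∧ ∀ x, Tendsto (fun n => g n x) atTop (𝓝 (ψ x))

/-- Approximate `ψ` within `2⁻ⁿ⁻¹` by `Fₙ = lim_k gₙₖ`; then `ψ = F₀ + ∑ₙ (Fₙ₊₁ - Fₙ)`, and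
truncating `gₙ₊₁ₖ - gₙₖ` at the level `2⁻ⁿ` of `Fₙ₊₁ - Fₙ` makes the series
`g₀ₖ + ∑ₙ trunc (gₙ₊₁ₖ - gₙₖ)` dominated uniformly in `k`, so Tannery's theorem applies. -/
theorem IsBaireClassOne.of_forall_exists_abs_sub_le {ψ : X → ℝ}
    (h : ∀ ε > 0, ∃ f, IsBaireClassOne f ∧ ∀ x, |f x - ψ x| ≤ ε) : IsBaireClassOne ψ := by
  choose F hF hFψ using fun n : ℕ => h ((1 / 2) ^ (n + 1)) (by positivity)
  choose g hg hgF using hF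
  have hFlim (x : X) : Tendsto (fun n => F n x) atTop (𝓝 (ψ x)) := by
    refine tendsto_iff_norm_sub_tendsto_zero.2 (squeeze_zero (fun _ => norm_nonneg _)
      (fun n => hFψ n x) ?_)
    exact (tendsto_pow_atTop_nhds_zero_of_lt_one (by norm_num) (by norm_num)).comp
      (tendsto_add_atTop_nat 1)
  have hdiff (n : ℕ) (x : X) : |F (n + 1) x - F n x| ≤ (1 / 2) ^ n := by
    calc |F (n + 1) x - F n x| ≤ |F (n + 1) x - ψ x| + |ψ x - F n x| := abs_sub_le ..
      _ = |F (n + 1) x - ψ x| + |F n x - ψ x| := by rw [abs_sub_comm (ψ x)]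
      _ ≤ (1 / 2) ^ (n + 1 + 1) + (1 / 2) ^ (n + 1) := add_le_add (hFψ _ x) (hFψ n x)
      _ = 3 / 4 * (1 / 2) ^ n := by ring
      _ ≤ (1 / 2) ^ n := by linarith [pow_nonneg (by norm_num : (0 : ℝ) ≤ 1 / 2) n]
  set c : ℕ → ℕ → X → ℝ := fun n k x =>
    max (-(1 / 2) ^ n) (min ((1 / 2) ^ n) (g (n + 1) k x - g n k x))
  have hc_le (n k : ℕ) (x : X) : ‖c n k x‖ ≤ (1 / 2) ^ n := abs_max_neg_min_le (by positivity) _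
  refine ⟨fun k x => g 0 k x + ∑' n, c n k x, fun k => ?_, fun x => ?_⟩
  · refine (hg 0 k).add
      (continuous_tsum (fun n => ?_) summable_geometric_two fun n x => hc_le n k x)
    exact continuous_const.max (continuous_const.min ((hg (n + 1) k).sub (hg n k)))
  · have hsum : HasSum (fun n => F (n + 1) x - F n x) (ψ x - F 0 x) := by
      have hs : Summable fun n => F (n + 1) x - F n x :=
        .of_norm_bounded summable_geometric_two fun n => hdiff n x
      refine hs.hasSum_iff_tendsto_nat.2 ?_
      simpa only [Finset.sum_range_sub (fun n => F n x)] using (hFlim x).sub_const (F 0 x)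
    have hc_lim (n : ℕ) : Tendsto (fun k => c n k x) atTop (𝓝 (F (n + 1) x - F n x)) := by
      rw [← max_neg_min_eq_self (hdiff n x)]
      exact tendsto_const_nhds.max (tendsto_const_nhds.min ((hgF (n + 1) x).sub (hgF n x)))
    have := (hgF 0 x).add (tendsto_tsum_of_dominated_convergence summable_geometric_two hc_lim
      (Eventually.of_forall fun k n => hc_le n k x))
    rwa [hsum.tsum_eq, add_sub_cancel] at this

theorem exists_continuous_eqOn_of_pairwiseDisjoint [NormalSpace X] {ι : Type*} [DecidableEq ι]
    {s : Finset ι} {K : ι → Set X} (hK : ∀ i ∈ s, IsClosed (K i))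
    (hd : (s : Set ι).PairwiseDisjoint K) (v : ι → ℝ) :
    ∃ h : C(X, ℝ), ∀ i ∈ s, ∀ x ∈ K i, h x = v i := by
  have (i : ι) (hi : i ∈ s) :
      ∃ g : C(X, ℝ), EqOn g 0 (⋃ j ∈ s.erase i, K j) ∧ EqOn g 1 (K i) := by
    obtain ⟨g, hg0, hg1, -⟩ := exists_continuous_zero_one_of_isClosed
      (isClosed_biUnion_finset fun j hj => hK j (Finset.mem_of_mem_erase hj)) (hK i hi)
      (disjoint_iUnion₂_left.2 fun j hj =>
        hd (Finset.mem_of_mem_erase hj) hi (Finset.ne_of_mem_erase hj))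
    exact ⟨g, hg0, hg1⟩
  choose! g hg0 hg1 using this
  refine ⟨∑ j ∈ s, v j • g j, fun i hi x hx => ?_⟩
  rw [ContinuousMap.coe_sum, Finset.sum_apply, Finset.sum_eq_single_of_mem i hi]
  · simp [hg1 i hi hx]
  · intro j hj hji
    simp [hg0 j hj (mem_biUnion (Finset.mem_erase.2 ⟨Ne.symm hji, hi⟩) hx)]

end BaireClassOne

section Metric

variable [MetricSpace X]

open scoped Classical in
/-- For each `k` the sets `Gₘ` minus a `1/(k+1)`-neighbourhood of `G₀ ∪ … ∪ Gₘ₋₁`, `m ≤ k`,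
are disjoint and closed, and every `x` eventually lies in the one indexed by its first `m`. -/
theorem isBaireClassOne_comp_find_of_isClosed {G : ℕ → Set X} (hG : ∀ m, IsClosed (G m))
    (hcover : ∀ x, ∃ m, x ∈ G m) (v : ℕ → ℝ) :
    IsBaireClassOne fun x => v (Nat.find (hcover x)) := by
  set P : ℕ → Set X := fun m => ⋃ j ∈ Finset.range m, G j
  set K : ℕ → ℕ → Set X := fun k m => G m \ thickening (1 / (k + 1)) (P m)
  have hK (k : ℕ) : Pairwise (Disjoint on K k) := (pairwise_disjoint_on _).2 fun i j hij =>
    disjoint_left.2 fun x hxi hxj => hxj.2 (self_subset_thickening (by positivity) _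
      (mem_biUnion (Finset.mem_range.2 hij) hxi.1))
  choose h hh using fun k => exists_continuous_eqOn_of_pairwiseDisjoint
    (s := Finset.range (k + 1)) (fun m _ => (hG m).sdiff isOpen_thickening)
    ((hK k).set_pairwise _) v
  refine ⟨fun k => h k, fun k => (h k).continuous, fun x => tendsto_const_nhds.congr' ?_⟩
  set m := Nat.find (hcover x)
  have hxP : x ∉ closure (P m) := by
    rw [(isClosed_biUnion_finset fun j _ => hG j).closure_eq]
    simp only [mem_iUnion₂, Finset.mem_range, not_exists]
    exact fun j hj => Nat.find_min (hcover x) hj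
  obtain ⟨δ, hδ, hxδ⟩ : ∃ δ > 0, x ∉ thickening δ (P m) := by
    simpa [closure_eq_iInter_thickening] using hxP
  filter_upwards [eventually_ge_atTop m, tendsto_one_div_add_atTop_nhds_zero_nat.eventually
    (gt_mem_nhds hδ)] with k hkm hkδ
  have hxK : x ∈ K k m := ⟨Nat.find_spec (hcover x), fun hx => hxδ (thickening_mono hkδ.le _ hx)⟩
  exact (hh k m (Finset.mem_range.2 (by omega)) x hxK).symm

theorem IsBaireClassOne.of_isFσ_preimage_Ioo {ψ : X → ℝ} (h : ∀ a b, IsFσ (ψ ⁻¹' Ioo a b)) :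
    IsBaireClassOne ψ := by
  classical
  refine .of_forall_exists_abs_sub_le fun ε hε => ?_
  choose C hC hCψ using fun r : ℚ => (h (r - ε) (r + ε)).exists_eq_iUnion_isClosed
  set e : ℕ ≃ ℚ × ℕ := (Denumerable.eqv (ℚ × ℕ)).symm
  set G : ℕ → Set X := fun m => C (e m).1 (e m).2
  have hcover (x : X) : ∃ m, x ∈ G m := by
    obtain ⟨r, hr₁, hr₂⟩ := exists_rat_btwn (show ψ x - ε < ψ x by linarith)
    have hx : x ∈ ψ ⁻¹' Ioo (r - ε) (r + ε) := ⟨by linarith, by linarith⟩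
    rw [hCψ r, mem_iUnion] at hx
    obtain ⟨n, hn⟩ := hx
    exact ⟨e.symm (r, n), by simpa only [G, e.apply_symm_apply] using hn⟩
  refine ⟨_, isBaireClassOne_comp_find_of_isClosed (fun m => hC _ _) hcover
    fun m => ((e m).1 : ℝ), fun x => ?_⟩
  have hx : x ∈ ψ ⁻¹' Ioo ((e (Nat.find (hcover x))).1 - ε) ((e (Nat.find (hcover x))).1 + ε) := by
    rw [hCψ]
    exact mem_iUnion_of_mem _ (Nat.find_spec (hcover x))
  exact abs_le.2 ⟨by linarith [hx.2], by linarith [hx.1]⟩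

end Metric

/-- Rosenthal's independence of the pairs `({fₙ < r₁}, {fₙ > r₂})`. -/
def IsIndependentSeq (f : ℕ → X → ℝ) (r₁ r₂ : ℝ) : Prop :=
  ∀ α : ℕ → Bool, ∃ x, ∀ n, if α n then r₂ < f n x else f n x < r₁

def SplitsOn [TopologicalSpace X] (A : Set C(X, ℝ)) (F : Set X) (r₁ r₂ : ℝ) : Prop :=
  ∀ 𝒲 : Set (Set X), 𝒲.Finite → (∀ W ∈ 𝒲, IsOpen W ∧ (F ∩ W).Nonempty) →
    ∃ f ∈ A, ∀ W ∈ 𝒲, (∃ a ∈ F ∩ W, f a < r₁) ∧ ∃ b ∈ F ∩ W, r₂ < f b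

theorem IsIndependentSeq.not_forall_tendsto {f : ℕ → X → ℝ} {r₁ r₂ : ℝ}
    (hf : IsIndependentSeq f r₁ r₂) (hr : r₁ < r₂) {φ : ℕ → ℕ} (hφ : StrictMono φ) (ψ : X → ℝ) :
    ¬∀ x, Tendsto (fun k => f (φ k) x) atTop (𝓝 (ψ x)) := by
  classical
  intro hlim
  obtain ⟨x, hx⟩ := hf fun m => decide (∃ j, φ (2 * j + 1) = m)
  have hodd (j : ℕ) : r₂ < f (φ (2 * j + 1)) x := by simpa using hx (φ (2 * j + 1))
  have heven (j : ℕ) : f (φ (2 * j)) x < r₁ := by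
    have := hx (φ (2 * j))
    rwa [if_neg] at this
    simp only [decide_eq_true_eq, not_exists]
    intro i hi
    have := hφ.injective hi
    omega
  have hmono_even : StrictMono fun j : ℕ => 2 * j := strictMono_mul_left_of_pos two_pos
  have hmono_odd : StrictMono fun j : ℕ => 2 * j + 1 := fun a b h => by dsimp only; omega
  have h₁ : ψ x ≤ r₁ :=
    le_of_tendsto' ((hlim x).comp hmono_even.tendsto_atTop) fun j => (heven j).le
  have h₂ : r₂ ≤ ψ x :=
    ge_of_tendsto' ((hlim x).comp hmono_odd.tendsto_atTop) fun j => (hodd j).le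
  linarith

section Metric

variable [MetricSpace X]

theorem exists_isOpen_mem_closure_subset_diam_le {U : Set X} {x : X} (hU : U ∈ 𝓝 x) {ε : ℝ}
    (hε : 0 < ε) : ∃ V, IsOpen V ∧ x ∈ V ∧ closure V ⊆ U ∧ Bornology.IsBounded V ∧ diam V ≤ ε := by
  obtain ⟨ρ, hρ, hρU⟩ := nhds_basis_closedBall.mem_iff.1 hU
  have hr : 0 < min ρ (ε / 2) := lt_min hρ (by linarith)
  refine ⟨ball x (min ρ (ε / 2)), isOpen_ball, mem_ball_self hr, ?_, isBounded_ball, ?_⟩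
  · exact closure_ball_subset_closedBall.trans
      ((closedBall_subset_closedBall (min_le_left _ _)).trans hρU)
  · linarith [diam_ball (x := x) hr.le, min_le_right ρ (ε / 2)]

variable {A : Set C(X, ℝ)} {F : Set X} {r₁ r₂ : ℝ}

theorem SplitsOn.exists_mem_refinement (hA : SplitsOn A F r₁ r₂)
    {n : ℕ} {W : (Fin n → Bool) → Set X} (hW : ∀ s, IsOpen (W s) ∧ (F ∩ W s).Nonempty)
    {ε : ℝ} (hε : 0 < ε) :
    ∃ f ∈ A, ∃ W' : (Fin (n + 1) → Bool) → Set X, (∀ t, IsOpen (W' t) ∧ (F ∩ W' t).Nonempty) ∧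
      ∀ t, closure (W' t) ⊆ W (Fin.init t) ∧ Bornology.IsBounded (W' t) ∧ diam (W' t) ≤ ε ∧
        ∀ x ∈ W' t, if t (Fin.last n) then r₂ < f x else f x < r₁ := by
  obtain ⟨f, hfA, hf⟩ := hA (range W) (finite_range W) (forall_mem_range.2 hW)
  set M : Bool → Set X := fun b => {x | if b then r₂ < f x else f x < r₁}
  have hM (b : Bool) : IsOpen (M b) := by
    cases b
    · exact isOpen_lt f.continuous continuous_const
    · exact isOpen_lt continuous_const f.continuous
  have hc (t : Fin (n + 1) → Bool) : ∃ c ∈ F, c ∈ W (Fin.init t) ∩ M (t (Fin.last n)) := by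
    obtain ⟨⟨a, ⟨haF, haW⟩, ha⟩, ⟨b, ⟨hbF, hbW⟩, hb⟩⟩ := hf _ (mem_range_self (Fin.init t))
    cases t (Fin.last n)
    · exact ⟨a, haF, haW, by simpa [M] using ha⟩
    · exact ⟨b, hbF, hbW, by simpa [M] using hb⟩
  choose c hcF hcWM using hc
  choose V hV hcV hVsub hVbdd hVdiam using fun t =>
    exists_isOpen_mem_closure_subset_diam_le (((hW _).1.inter (hM _)).mem_nhds (hcWM t)) hε
  refine ⟨f, hfA, V, fun t => ⟨hV t, c t, hcF t, hcV t⟩, fun t => ⟨?_, hVbdd t, hVdiam t, ?_⟩⟩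
  · exact (hVsub t).trans inter_subset_left
  · exact fun x hx => ((hVsub t) (subset_closure hx)).2

theorem SplitsOn.exists_isIndependentSeq [CompleteSpace X] (hA : SplitsOn A F r₁ r₂)
    (hF : F.Nonempty) :
    ∃ f : ℕ → C(X, ℝ), (∀ n, f n ∈ A) ∧ IsIndependentSeq (fun n => ⇑(f n)) r₁ r₂ := by
  choose f hfA W' hW' hW'sub using fun n (W : {W : (Fin n → Bool) → Set X //
    ∀ s, IsOpen (W s) ∧ (F ∩ W s).Nonempty}) =>
      hA.exists_mem_refinement W.2 (ε := (1 / 2) ^ n) (by positivity)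
  let W (n : ℕ) : {W : (Fin n → Bool) → Set X // ∀ s, IsOpen (W s) ∧ (F ∩ W s).Nonempty} :=
    Nat.rec ⟨fun _ => univ, fun _ => ⟨isOpen_univ, by simpa using hF⟩⟩
      (fun n W => ⟨W' n W, hW' n W⟩) n
  refine ⟨fun n => f n (W n), fun n => hfA n _, fun α => ?_⟩
  set s : ℕ → Set X := fun n => closure ((W (n + 1)).1 fun i => α i)
  have hsub (n : ℕ) : s (n + 1) ⊆ (W (n + 1)).1 fun i => α i :=
    (hW'sub (n + 1) (W (n + 1)) fun i => α i).1
  have hanti : Antitone s := antitone_nat_of_succ_le fun n => (hsub n).trans subset_closure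
  obtain ⟨x, hx⟩ : (⋂ n, s n).Nonempty := by
    refine nonempty_iInter_of_nonempty_biInter (fun n => isClosed_closure)
      (fun n => (hW'sub n (W n) _).2.1.closure) (fun N => ?_) ?_
    · obtain ⟨y, -, hy⟩ := ((W (N + 1)).2 fun i => α i).2
      exact ⟨y, mem_iInter₂.2 fun n hn => hanti hn (subset_closure hy)⟩
    · refine squeeze_zero (fun n => diam_nonneg) (fun n => ?_)
        (tendsto_pow_atTop_nhds_zero_of_lt_one (r := (1 / 2 : ℝ)) (by norm_num) (by norm_num))
      rw [diam_closure]
      exact (hW'sub n (W n) _).2.2.1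
  exact ⟨x, fun n => (hW'sub n (W n) fun i => α i).2.2.2 x (hsub n (mem_iInter.1 hx (n + 1)))⟩

end Metric

theorem exists_mem_forall_abs_sub_lt_of_mem_closure {s : Set (X → ℝ)} {ψ : X → ℝ}
    (hψ : ψ ∈ closure s) {S : Set X} (hS : S.Finite) {ε : ℝ} (hε : 0 < ε) :
    ∃ g ∈ s, ∀ x ∈ S, |g x - ψ x| < ε := by
  have hopen : IsOpen {g : X → ℝ | ∀ x ∈ S, |g x - ψ x| < ε} := by
    simp only [ofPred_forall]
    exact hS.isOpen_biInter fun x _ => isOpen_lt (by fun_prop) continuous_const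
  obtain ⟨g, hg, hgs⟩ := _root_.mem_closure_iff.1 hψ _ hopen fun x _ => by simpa using hε
  exact ⟨g, hgs, hg⟩

theorem splitsOn_of_mem_closure [TopologicalSpace X] {A : Set C(X, ℝ)} {ψ : X → ℝ}
    (hψ : ψ ∈ closure ((fun f : C(X, ℝ) => (f : X → ℝ)) '' A)) {F : Set X} {p q r₁ r₂ : ℝ}
    (h₁ : p < r₁) (h₂ : r₂ < q)
    (hL : F ⊆ closure (F ∩ {x | ψ x ≤ p})) (hU : F ⊆ closure (F ∩ {x | q ≤ ψ x})) :
    SplitsOn A F r₁ r₂ := by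
  intro 𝒲 h𝒲 hW
  have hmeet {S : Set X} (hS : F ⊆ closure (F ∩ S)) (W : Set X) (hW𝒲 : W ∈ 𝒲) :
      ∃ a ∈ F ∩ W, a ∈ S := by
    obtain ⟨x, hxF, hxW⟩ := (hW W hW𝒲).2
    obtain ⟨a, haW, haF, haS⟩ := _root_.mem_closure_iff.1 (hS hxF) W (hW W hW𝒲).1 hxW
    exact ⟨a, ⟨haF, haW⟩, haS⟩
  choose a ha haL using fun W : 𝒲 => hmeet hL W W.2
  choose b hb hbU using fun W : 𝒲 => hmeet hU W W.2
  have := h𝒲.to_subtype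
  obtain ⟨_, ⟨f, hfA, rfl⟩, hf⟩ := exists_mem_forall_abs_sub_lt_of_mem_closure hψ
    ((finite_range a).union (finite_range b)) (lt_min (sub_pos.2 h₁) (sub_pos.2 h₂))
  beta_reduce at hf
  refine ⟨f, hfA, fun W hW𝒲 => ⟨⟨a ⟨W, hW𝒲⟩, ha _, ?_⟩, ⟨b ⟨W, hW𝒲⟩, hb _, ?_⟩⟩⟩
  · have := abs_lt.1 (hf _ (Or.inl (mem_range_self (⟨W, hW𝒲⟩ : 𝒲))))
    linarith [show ψ (a ⟨W, hW𝒲⟩) ≤ p from haL _, min_le_left (r₁ - p) (q - r₂)]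
  · have := abs_lt.1 (hf _ (Or.inr (mem_range_self (⟨W, hW𝒲⟩ : 𝒲))))
    linarith [show q ≤ ψ (b ⟨W, hW𝒲⟩) from hbU _, min_le_right (r₁ - p) (q - r₂)]

end

theorem stmt5_general {X : Type*} [TopologicalSpace X] [PolishSpace X]
    (A : Set C(X, ℝ))
    (hseq : ∀ u : ℕ → C(X, ℝ), (∀ n, u n ∈ A) → ∃ φ : ℕ → ℕ, StrictMono φ ∧
      ∃ ψ : X → ℝ, ∀ x, Tendsto (fun k => u (φ k) x) atTop (𝓝 (ψ x))) :
    ∀ ψ ∈ closure ((fun f : C(X, ℝ) => (f : X → ℝ)) '' A),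
      ∃ g : ℕ → X → ℝ, (∀ n, Continuous (g n)) ∧
        ∀ x, Tendsto (fun n => g n x) atTop (𝓝 (ψ x)) := by
  intro ψ hψ
  let := TopologicalSpace.upgradeIsCompletelyMetrizable X
  refine IsBaireClassOne.of_isFσ_preimage_Ioo
    (isFσ_preimage_Ioo_of_forall_not_dense fun p q hpq F _ hF ⟨hL, hU⟩ => ?_)
  have hsplit : SplitsOn A F ((2 * p + q) / 3) ((p + 2 * q) / 3) :=
    splitsOn_of_mem_closure hψ (by linarith) (by linarith) hL hU
  obtain ⟨f, hfA, hf⟩ := hsplit.exists_isIndependentSeq hF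
  obtain ⟨φ, hφ, ψ', hψ'⟩ := hseq f hfA
  exact hf.not_forall_tendsto (by linarith) hφ ψ' hψ'

theorem stmt5 {X : Type*} [TopologicalSpace X] [PolishSpace X]
    (A : Set C(X, ℝ)) (hbd : ∀ x : X, ∃ C : ℝ, ∀ f ∈ A, |f x| ≤ C)
    (hseq : ∀ u : ℕ → C(X, ℝ), (∀ n, u n ∈ A) → ∃ φ : ℕ → ℕ, StrictMono φ ∧
      ∃ ψ : X → ℝ, ∀ x, Tendsto (fun k => u (φ k) x) atTop (𝓝 (ψ x))) :
    ∀ ψ ∈ closure ((fun f : C(X, ℝ) => (f : X → ℝ)) '' A),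
      ∃ g : ℕ → X → ℝ, (∀ n, Continuous (g n)) ∧
        ∀ x, Tendsto (fun n => g n x) atTop (𝓝 (ψ x)) :=
  stmt5_general A hseq
end

section
/- Let K be a compact metrizable space and (f_n) a sequence of continuous {0,1}-valued functions on K with no pointwise convergent subsequence. Then (f_n) has an independent subsequence: there is a subsequence (f_{n_k}) such that for every pair of disjoint finite sets E, F of indices k, the set {x ∈ K : f_{n_k}(x) = 1 for k ∈ E, f_{n_k}(x) = 0 for k ∈ F} is nonempty. -/
open Filter Topology

/-!
Write `A n = {f n = 1}`. Given an infinite `M ⊆ ℕ`, a set `C ⊆ K` has a convergent subsequence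
from `M` if along some infinite `L ⊆ M` no point of `C` oscillates between `A n` and its complement.
The key step: if finitely many sets all fail this on `M`, there are `d ∈ M` and an infinite
`M' ⊆ M` above `d` on which every piece `C ∩ A d`, `C \ A d` still fails it. Otherwise a fusion
sequence `d₀ < d₁ < ⋯` of such witnesses, together with a pigeonhole on the piece that converges,
would give a convergent subsequence for one `C` along `{d_k}`. Applying the step to all atoms of
the Boolean algebra generated by `A d₀, …, A d_{k-1}` at once yields indices whose atoms are all
nonempty, i.e. an independent subsequence.
-/

namespace Rosenthal

variable {K : Type*} {A : ℕ → Set K}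

def Oscillates (A : ℕ → Set K) (L : Set ℕ) (x : K) : Prop :=
  {n ∈ L | x ∈ A n}.Infinite ∧ {n ∈ L | x ∉ A n}.Infinite

def HasConvergentSubseqOn (A : ℕ → Set K) (C : Set K) (M : Set ℕ) : Prop :=
  ∃ L ⊆ M, L.Infinite ∧ ∀ x ∈ C, ¬ Oscillates A L x

def IsIndependent (A : ℕ → Set K) : Prop :=
  ∀ E F : Finset ℕ, Disjoint E F → ∃ x, (∀ m ∈ E, x ∈ A m) ∧ ∀ m ∈ F, x ∉ A m

section Oscillates

variable {L L' S : Set ℕ} {x : K}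

theorem Oscillates.mono (h : Oscillates A L x) (hLL' : L ⊆ L') : Oscillates A L' x :=
  ⟨h.1.mono fun _ hn => ⟨hLL' hn.1, hn.2⟩, h.2.mono fun _ hn => ⟨hLL' hn.1, hn.2⟩⟩

theorem Oscillates.diff (h : Oscillates A L x) (hS : S.Finite) : Oscillates A (L \ S) x :=
  ⟨(h.1.sdiff hS).mono fun _ hn => ⟨⟨hn.1.1, hn.2⟩, hn.1.2⟩,
    (h.2.sdiff hS).mono fun _ hn => ⟨⟨hn.1.1, hn.2⟩, hn.1.2⟩⟩

theorem not_oscillates_of_forall_iff {q : Prop} (h : ∀ n ∈ L, x ∈ A n ↔ q) :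
    ¬ Oscillates A L x := by
  rintro ⟨hin, hout⟩
  by_cases hq : q
  · exact hout (Set.finite_empty.subset fun n hn => hn.2 ((h n hn.1).2 hq))
  · exact hin (Set.finite_empty.subset fun n hn => hq ((h n hn.1).1 hn.2))

theorem exists_eventually_iff_of_not_oscillates {φ : ℕ → ℕ} (hφ : StrictMono φ)
    (hφL : ∀ m, φ m ∈ L) (h : ¬ Oscillates A L x) :
    ∃ q : Prop, ∀ᶠ m in atTop, x ∈ A (φ m) ↔ q := by
  have hφ' : Tendsto φ atTop cofinite := Nat.cofinite_eq_atTop ▸ hφ.tendsto_atTop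
  rcases not_and_or.1 h with hin | hout
  · refine ⟨False, (hφ'.eventually (Set.not_infinite.1 hin).eventually_cofinite_notMem).mono
      fun m hm => ?_⟩
    simpa [hφL m] using hm
  · refine ⟨True, (hφ'.eventually (Set.not_infinite.1 hout).eventually_cofinite_notMem).mono
      fun m hm => ?_⟩
    simpa [hφL m] using hm

end Oscillates

theorem nonempty_of_not_hasConvergentSubseqOn {C : Set K} {M : Set ℕ} (hM : M.Infinite)
    (h : ¬ HasConvergentSubseqOn A C M) : C.Nonempty := by
  by_contra hC
  exact h ⟨M, subset_rfl, hM, fun x hx => absurd ⟨x, hx⟩ hC⟩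

theorem exists_diagonal_seq {𝒞 : Set (Set K)} {M : Set ℕ} (hM : M.Infinite)
    (h : ∀ L ⊆ M, L.Infinite → ∃ d ∈ L, ∃ L' ⊆ L, L'.Infinite ∧ (∀ n ∈ L', d < n) ∧
      ∃ C ∈ 𝒞, ∃ q : Prop, ∀ x ∈ C, (x ∈ A d ↔ q) → ¬ Oscillates A L' x) :
    ∃ (d : ℕ → ℕ) (C : ℕ → Set K) (q : ℕ → Prop), StrictMono d ∧ (∀ k, d k ∈ M) ∧
      ∀ k, C k ∈ 𝒞 ∧ ∀ x ∈ C k, (x ∈ A (d k) ↔ q k) → ¬ Oscillates A (d '' Set.Ioi k) x := by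
  choose! d hdL next hnextL hnext hnextd C hC q hq using h
  set L : ℕ → Set ℕ := fun k => next^[k] M
  have hsucc (k : ℕ) : L (k + 1) = next (L k) := Function.iterate_succ_apply' ..
  have hL (k : ℕ) : L k ⊆ M ∧ (L k).Infinite := by
    induction k with
    | zero => exact ⟨subset_rfl, hM⟩
    | succ k ih => rw [hsucc]; exact ⟨(hnextL _ ih.1 ih.2).trans ih.1, hnext _ ih.1 ih.2⟩
  have hanti : Antitone L :=
    antitone_nat_of_succ_le fun k => hsucc k ▸ hnextL _ (hL k).1 (hL k).2
  have hdL' (k : ℕ) : d (L k) ∈ L k := hdL _ (hL k).1 (hL k).2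
  refine ⟨fun k => d (L k), fun k => C (L k), fun k => q (L k),
    strictMono_nat_of_lt_succ fun k => ?_, fun k => (hL k).1 (hdL' k),
    fun k => ⟨hC _ (hL k).1 (hL k).2, fun x hx hxq hosc => ?_⟩⟩
  · exact hnextd _ (hL k).1 (hL k).2 _ (hsucc k ▸ hdL' (k + 1))
  · refine hq _ (hL k).1 (hL k).2 x hx hxq (hosc.mono ?_)
    rintro _ ⟨j, hj, rfl⟩
    exact hsucc k ▸ hanti (Nat.succ_le_of_lt hj) (hdL' j)

theorem exists_hasConvergentSubseqOn_of_diagonal_seq {𝒞 : Set (Set K)} (h𝒞 : 𝒞.Finite)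
    {M : Set ℕ} {d : ℕ → ℕ} {C : ℕ → Set K} {q : ℕ → Prop} (hd : StrictMono d) (hdM : ∀ k, d k ∈ M)
    (hC : ∀ k, C k ∈ 𝒞)
    (hconv : ∀ k, ∀ x ∈ C k, (x ∈ A (d k) ↔ q k) → ¬ Oscillates A (d '' Set.Ioi k) x) :
    ∃ C ∈ 𝒞, HasConvergentSubseqOn A C M := by
  have := h𝒞.to_subtype
  obtain ⟨⟨⟨C₀, hC₀⟩, q₀⟩, hI⟩ :=
    Finite.exists_infinite_fiber fun k => ((⟨C k, hC k⟩ : 𝒞), q k)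
  set I := (fun k => ((⟨C k, hC k⟩ : 𝒞), q k)) ⁻¹' {(⟨C₀, hC₀⟩, q₀)}
  have hI' (k : ℕ) (hk : k ∈ I) : C k = C₀ ∧ q k = q₀ := by simpa [I] using hk
  refine ⟨C₀, hC₀, d '' I, by rintro _ ⟨k, -, rfl⟩; exact hdM k,
    (Set.infinite_coe_iff.1 hI).image hd.injective.injOn, fun x hx => ?_⟩
  -- `x` either lies on the recurring side of some `d k`, and then converges along the tail
  -- of `d '' I`, or on the other side of every `d k`, and then is constant along `d '' I`.
  by_cases hside : ∃ k ∈ I, x ∈ A (d k) ↔ q₀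
  · obtain ⟨k, hk, hxk⟩ := hside
    obtain ⟨rfl, rfl⟩ := hI' k hk
    intro hosc
    refine hconv k x hx hxk ((hosc.diff ((Set.finite_Iic k).image d)).mono ?_)
    rintro _ ⟨⟨j, -, rfl⟩, hj⟩
    exact ⟨j, Set.mem_Ioi.2 (lt_of_not_ge fun hjk => hj ⟨j, hjk, rfl⟩), rfl⟩
  · refine not_oscillates_of_forall_iff (q := ¬ q₀) ?_
    rintro _ ⟨k, hk, rfl⟩
    exact (Classical.not_iff.1 fun h => hside ⟨k, hk, h.symm⟩).symm

theorem exists_splitting_index {𝒞 : Set (Set K)} (h𝒞 : 𝒞.Finite) {M : Set ℕ}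
    (hM : M.Infinite) (h : ∀ C ∈ 𝒞, ¬ HasConvergentSubseqOn A C M) :
    ∃ d ∈ M, ∃ M' ⊆ M, M'.Infinite ∧ (∀ n ∈ M', d < n) ∧
      ∀ C ∈ 𝒞, ∀ q : Prop, ¬ HasConvergentSubseqOn A (C ∩ {x | x ∈ A d ↔ q}) M' := by
  by_contra! hcon
  obtain ⟨d, C, q, hd, hdM, hC⟩ := exists_diagonal_seq hM fun L hLM hL => by
    obtain ⟨d, hd⟩ := hL.nonempty
    obtain ⟨C, hC, q, L', hL'M, hL', hconv⟩ := hcon d (hLM hd) {n ∈ L | d < n}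
      (fun n hn => hLM hn.1) ((hL.sdiff (Set.finite_Iic d)).mono fun n hn => ⟨hn.1, not_le.1 hn.2⟩)
      fun n hn => hn.2
    exact ⟨d, hd, L', fun n hn => (hL'M hn).1, hL', fun n hn => (hL'M hn).2, C, hC, q,
      fun x hx hxq => hconv x ⟨hx, hxq⟩⟩
  obtain ⟨C₀, hC₀, hconv⟩ := exists_hasConvergentSubseqOn_of_diagonal_seq h𝒞 hd hdM
    (fun k => (hC k).1) fun k => (hC k).2
  exact h C₀ hC₀ hconv

def cell (A : ℕ → Set K) (D : Finset ℕ) (S : Set ℕ) : Set K :=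
  {x | ∀ n ∈ D, x ∈ A n ↔ n ∈ S}

@[simp]
theorem cell_empty (S : Set ℕ) : cell A ∅ S = Set.univ := by
  simp [cell]

theorem cell_insert (d : ℕ) (D : Finset ℕ) (S : Set ℕ) :
    cell A (insert d D) S = cell A D S ∩ {x | x ∈ A d ↔ d ∈ S} := by
  ext x
  simp [cell, and_comm]

theorem finite_range_cell (D : Finset ℕ) : (Set.range (cell A D)).Finite := by
  refine (Set.finite_range fun τ : D → Prop => {x | ∀ n : D, x ∈ A n ↔ τ n}).subset ?_
  rintro _ ⟨S, rfl⟩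
  exact ⟨fun n => (n : ℕ) ∈ S, by ext; simp [cell]⟩

structure IsReservoir (A : ℕ → Set K) (D : Finset ℕ) (M : Set ℕ) : Prop where
  infinite : M.Infinite
  lt : ∀ d ∈ D, ∀ n ∈ M, d < n
  not_hasConvergentSubseqOn_cell : ∀ S : Set ℕ, ¬ HasConvergentSubseqOn A (cell A D S) M

theorem isReservoir_empty_univ (h : ¬ HasConvergentSubseqOn A Set.univ Set.univ) :
    IsReservoir A ∅ Set.univ :=
  ⟨Set.infinite_univ, by simp, by simpa using h⟩

theorem IsReservoir.exists_insert {D : Finset ℕ} {M : Set ℕ} (h : IsReservoir A D M) :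
    ∃ d, (∀ d' ∈ D, d' < d) ∧ ∃ M', IsReservoir A (insert d D) M' := by
  obtain ⟨d, hdM, M', hM'M, hM', hdM', hsplit⟩ := exists_splitting_index (finite_range_cell D)
    h.infinite (by rintro _ ⟨S, rfl⟩; exact h.not_hasConvergentSubseqOn_cell S)
  refine ⟨d, fun d' hd' => h.lt d' hd' d hdM, M', hM', fun d' hd' n hn => ?_, fun S => ?_⟩
  · rcases Finset.mem_insert.1 hd' with rfl | hd'
    exacts [hdM' n hn, h.lt d' hd' n (hM'M hn)]
  · rw [cell_insert]
    exact hsplit _ ⟨S, rfl⟩ _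

theorem exists_strictMono_isIndependent (h : ¬ HasConvergentSubseqOn A Set.univ Set.univ) :
    ∃ φ : ℕ → ℕ, StrictMono φ ∧ IsIndependent (A ∘ φ) := by
  classical
  choose! next hnext M hM using fun s : Finset ℕ × Set ℕ =>
    fun hs : IsReservoir A s.1 s.2 => hs.exists_insert
  set u : ℕ → Finset ℕ × Set ℕ := fun k =>
    (fun s => (insert (next s) s.1, M s))^[k] (∅, Set.univ)
  have hsucc (k : ℕ) : u (k + 1) = (insert (next (u k)) (u k).1, M (u k)) :=
    Function.iterate_succ_apply' ..
  have hu (k : ℕ) : IsReservoir A (u k).1 (u k).2 := by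
    induction k with
    | zero => exact isReservoir_empty_univ h
    | succ k ih => rw [hsucc]; exact hM _ ih
  set φ := fun k => next (u k)
  have hφu (k : ℕ) : φ k ∈ (u (k + 1)).1 := by rw [hsucc]; exact Finset.mem_insert_self _ _
  have hmono : Monotone fun k => (u k).1 :=
    monotone_nat_of_le_succ fun k => by rw [hsucc]; exact Finset.subset_insert _ _
  have hφ : StrictMono φ := strictMono_nat_of_lt_succ fun k => hnext _ (hu (k + 1)) _ (hφu k)
  refine ⟨φ, hφ, fun E F hEF => ?_⟩
  obtain ⟨k, hk⟩ := Finset.exists_nat_subset_range (E ∪ F)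
  obtain ⟨x, hx⟩ := nonempty_of_not_hasConvergentSubseqOn (hu k).infinite
    ((hu k).not_hasConvergentSubseqOn_cell (φ '' E))
  have hxE (m : ℕ) (hm : m ∈ E ∪ F) : x ∈ A (φ m) ↔ m ∈ E :=
    (hx (φ m) (hmono (Finset.mem_range.1 (hk hm)) (hφu m))).trans hφ.injective.mem_set_image
  exact ⟨x, fun m hm => (hxE m (Finset.mem_union_left _ hm)).2 hm,
    fun m hm hxm => Finset.disjoint_left.1 hEF ((hxE m (Finset.mem_union_right _ hm)).1 hxm) hm⟩

end Rosenthal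

theorem stmt12_general {K : Type*}
    (f : ℕ → K → ℝ) (hf : ∀ n x, f n x = 0 ∨ f n x = 1)
    (h : ¬ ∃ φ : ℕ → ℕ, StrictMono φ ∧ ∃ ψ : K → ℝ,
      ∀ x, Tendsto (fun m => f (φ m) x) atTop (𝓝 (ψ x))) :
    ∃ φ : ℕ → ℕ, StrictMono φ ∧ ∀ E F : Finset ℕ, Disjoint E F →
      ∃ x : K, (∀ m ∈ E, f (φ m) x = 1) ∧ (∀ m ∈ F, f (φ m) x = 0) := by
  classical
  set A : ℕ → Set K := fun n => {x | f n x = 1}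
  have hf' (n : ℕ) (x : K) : f n x = if x ∈ A n then 1 else 0 := by
    rcases hf n x with h0 | h1 <;> simp [A, *]
  have hA : ¬ Rosenthal.HasConvergentSubseqOn A Set.univ Set.univ := by
    rintro ⟨L, -, hL, hconv⟩
    have hnth : StrictMono (Nat.nth (· ∈ L)) := Nat.nth_strictMono hL
    refine h ⟨Nat.nth (· ∈ L), hnth, ?_⟩
    choose q hq using fun x => Rosenthal.exists_eventually_iff_of_not_oscillates hnth
      (Nat.nth_mem_of_infinite hL) (hconv x trivial)
    refine ⟨fun x => if q x then 1 else 0, fun x => tendsto_const_nhds.congr' ?_⟩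
    filter_upwards [hq x] with m hm
    rw [hf']
    exact if_congr hm.symm rfl rfl
  obtain ⟨φ, hφ, hind⟩ := Rosenthal.exists_strictMono_isIndependent hA
  refine ⟨φ, hφ, fun E F hEF => ?_⟩
  obtain ⟨x, hE, hF⟩ := hind E F hEF
  exact ⟨x, hE, fun m hm => (hf _ x).resolve_right (hF m hm)⟩

theorem stmt12 {K : Type*} [TopologicalSpace K] [CompactSpace K]
    [TopologicalSpace.MetrizableSpace K]
    (f : ℕ → K → ℝ) (hc : ∀ n, Continuous (f n)) (hf : ∀ n x, f n x = 0 ∨ f n x = 1)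
    (h : ¬ ∃ φ : ℕ → ℕ, StrictMono φ ∧ ∃ ψ : K → ℝ,
      ∀ x, Tendsto (fun m => f (φ m) x) atTop (𝓝 (ψ x))) :
    ∃ φ : ℕ → ℕ, StrictMono φ ∧ ∀ E F : Finset ℕ, Disjoint E F →
      ∃ x : K, (∀ m ∈ E, f (φ m) x = 1) ∧ (∀ m ∈ F, f (φ m) x = 0) :=
  stmt12_general f hf h
end

section
/- Let K be a compact Hausdorff space and (f_n) a sequence of continuous {0,1}-valued functions on K. If (f_n) converges pointwise on a dense subset D ⊆ K and the family {f_n} has no independent subsequence on K, then (f_n) has a subsequence converging pointwise on all of K. -/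
/-!
Call `x` a witness of alternation for a finite `s ⊆ ℕ` if `f a x = 1` exactly at the elements
`a ∈ s` of even rank. Apply the Nash-Williams theorem (open Galvin–Prikry) to the family of
finite sets without such a witness: it yields an infinite `M ⊆ ℕ` such that either every
increasing sequence in `M` has an initial segment without a witness, or every finite subset of
`M` has one. In the first case `(f n)_{n ∈ M}` converges everywhere, since at a point of
divergence one can pick an increasing sequence in `M` along which the values alternate. In the
second case, writing `M = {φ 0 < φ 1 < ⋯}`, the subsequence `φ (3m+1)` is independent: the
pattern `E`, `F` is realised by a witness for the union over `m ∈ E ∪ F` of the pairs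
`{φ (3m+1), φ (3m+2)}` (for `m ∈ E`) and `{φ (3m), φ (3m+1)}` (for `m ∈ F`). -/

open Filter Topology

theorem Set.Infinite.inter_Ioi {α : Type*} [LinearOrder α] [LocallyFiniteOrderBot α]
    {s : Set α} (hs : s.Infinite) (a : α) : (s ∩ Set.Ioi a).Infinite := by
  simpa [Set.sdiff_eq, Set.compl_Iic] using hs.sdiff (Set.finite_Iic a)

namespace NashWilliams

open Finset

variable (F : Set (Finset ℕ))

def Accepts (s : Finset ℕ) (M : Set ℕ) : Prop :=
  ∀ g : ℕ → ℕ, StrictMono g → Set.range g ⊆ M → ∃ k, s ∪ (range k).image g ∈ F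

def Rejects (s : Finset ℕ) (M : Set ℕ) : Prop :=
  ∀ N ⊆ M, N.Infinite → ¬ Accepts F s N

variable {F} {s : Finset ℕ} {M N : Set ℕ}

theorem Rejects.mono (h : Rejects F s M) (hNM : N ⊆ M) : Rejects F s N :=
  fun N' hN'N => h N' (hN'N.trans hNM)

theorem Rejects.notMem (h : Rejects F s M) (hM : M.Infinite) : s ∉ F := fun hs =>
  h M subset_rfl hM fun _ _ _ => ⟨0, by simpa using hs⟩

theorem exists_accepts_or_rejects (s : Finset ℕ) (hM : M.Infinite) :
    ∃ N ⊆ M, N.Infinite ∧ (Accepts F s N ∨ Rejects F s N) := by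
  by_cases h : Rejects F s M
  · exact ⟨M, subset_rfl, hM, Or.inr h⟩
  · simp only [Rejects, not_forall, not_not] at h
    obtain ⟨N, hNM, hN, hacc⟩ := h
    exact ⟨N, hNM, hN, Or.inl hacc⟩

theorem image_range_add_one (g : ℕ → ℕ) (k : ℕ) :
    (range (k + 1)).image g = insert (g 0) ((range k).image (g ∘ Nat.succ)) := by
  rw [range_add_one', image_insert, map_eq_image, image_image]
  rfl

theorem accepts_image_of_accepts_insert {n : ℕ → ℕ} (hn : StrictMono n) {X : ℕ → Set ℕ}
    (htail : ∀ i j, i < j → n j ∈ X i) {I : Set ℕ}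
    (hI : ∀ i ∈ I, Accepts F (insert (n i) s) (X i)) : Accepts F s (n '' I) := by
  intro g hg hgI
  obtain ⟨i, hi, hgi⟩ := hgI ⟨0, rfl⟩
  have hg_tail : Set.range (g ∘ Nat.succ) ⊆ X i := by
    rintro _ ⟨j, rfl⟩
    obtain ⟨i', -, hi'⟩ := hgI ⟨j + 1, rfl⟩
    have : n i < n i' := by rw [hi', hgi]; exact hg j.succ_pos
    rw [Function.comp_apply, ← hi']
    exact htail i i' (hn.lt_iff_lt.1 this)
  obtain ⟨k, hk⟩ := hI i hi (g ∘ Nat.succ) (hg.comp fun _ _ => Nat.succ_lt_succ) hg_tail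
  exact ⟨k + 1, by rwa [image_range_add_one, union_insert, ← insert_union, ← hgi]⟩

theorem Rejects.exists_rejects_insert (hs : Rejects F s M) (hM : M.Infinite) :
    ∃ N ⊆ M, N.Infinite ∧ ∀ n ∈ N, Rejects F (insert n s) (N ∩ Set.Ioi n) := by
  have step : ∀ X : {X : Set ℕ // X.Infinite}, ∃ Y : {Y : Set ℕ // Y.Infinite},
      Y.1 ⊆ X.1 ∩ Set.Ioi (sInf X.1) ∧
        (Accepts F (insert (sInf X.1) s) Y.1 ∨ Rejects F (insert (sInf X.1) s) Y.1) := by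
    intro ⟨X, hX⟩
    obtain ⟨Y, hYX, hY, hdec⟩ := exists_accepts_or_rejects (insert (sInf X) s) (hX.inter_Ioi _)
    exact ⟨⟨Y, hY⟩, hYX, hdec⟩
  choose next hnext_sub hnext_dec using step
  set X : ℕ → Set ℕ := fun i => (next^[i] ⟨M, hM⟩).1
  set n : ℕ → ℕ := fun i => sInf (X i)
  have hX_succ : ∀ i, X (i + 1) ⊆ X i ∩ Set.Ioi (n i) := fun i => by
    simp only [X, n, Function.iterate_succ_apply']
    exact hnext_sub _
  have hdec : ∀ i, Accepts F (insert (n i) s) (X (i + 1)) ∨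
      Rejects F (insert (n i) s) (X (i + 1)) := fun i => by
    simp only [X, n, Function.iterate_succ_apply']
    exact hnext_dec _
  have hn_mem : ∀ i, n i ∈ X i := fun i => Nat.sInf_mem (next^[i] ⟨M, hM⟩).2.nonempty
  have hX_anti : Antitone X :=
    antitone_nat_of_succ_le fun i => (hX_succ i).trans Set.inter_subset_left
  have hn : StrictMono n := strictMono_nat_of_lt_succ fun i => (hX_succ i (hn_mem (i + 1))).2
  have htail : ∀ i j, i < j → n j ∈ X (i + 1) := fun i j hij => hX_anti hij (hn_mem j)
  have hn_M : ∀ i, n i ∈ M := fun i => hX_anti (Nat.zero_le i) (hn_mem i)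
  set I := {i | Accepts F (insert (n i) s) (X (i + 1))}
  have hI : I.Finite := by
    by_contra hI
    rw [Set.not_finite] at hI
    exact hs (n '' I) (by rintro _ ⟨i, -, rfl⟩; exact hn_M i) (hI.image hn.injective.injOn)
      (accepts_image_of_accepts_insert hn htail fun i hi => hi)
  obtain ⟨B, hB⟩ := hI.bddAbove
  refine ⟨n '' Set.Ioi B, by rintro _ ⟨i, -, rfl⟩; exact hn_M i,
    (Set.Ioi_infinite B).image hn.injective.injOn, ?_⟩
  rintro _ ⟨i, hi, rfl⟩
  have hrej : Rejects F (insert (n i) s) (X (i + 1)) :=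
    (hdec i).resolve_left fun hacc => (not_le.2 hi) (hB hacc)
  refine hrej.mono ?_
  rintro _ ⟨⟨j, -, rfl⟩, hj⟩
  exact htail i j (hn.lt_iff_lt.1 hj)

theorem exists_forall_rejects_insert {T : Finset (Finset ℕ)} (hM : M.Infinite)
    (hT : ∀ s ∈ T, Rejects F s M) :
    ∃ N ⊆ M, N.Infinite ∧
      ∀ s ∈ T, ∀ n ∈ N, Rejects F (insert n s) (N ∩ Set.Ioi n) := by
  induction T using Finset.induction_on with
  | empty => exact ⟨M, subset_rfl, hM, by simp⟩
  | insert s T _ ih =>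
    rw [forall_mem_insert] at hT
    obtain ⟨N, hNM, hN, hNT⟩ := ih hT.2
    obtain ⟨N', hN'N, hN', hN's⟩ := (hT.1.mono hNM).exists_rejects_insert hN
    refine ⟨N', hN'N.trans hNM, hN',
      (forall_mem_insert _ _ _).2 ⟨hN's, fun t ht n hn => ?_⟩⟩
    exact (hNT t ht n (hN'N hn)).mono (Set.inter_subset_inter_left _ hN'N)

theorem exists_insert_forall_subset_rejects {S : Finset ℕ} (hM : M.Infinite)
    (hS : ∀ t ⊆ S, Rejects F t M) :
    ∃ a ∉ S, ∃ N : Set ℕ, N.Infinite ∧ ∀ t ⊆ insert a S, Rejects F t N := by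
  obtain ⟨N, hNM, hN, hNS⟩ :=
    exists_forall_rejects_insert hM fun t ht => hS t (mem_powerset.1 ht)
  obtain ⟨a, haN, haS⟩ := (hN.sdiff S.finite_toSet).nonempty
  refine ⟨a, haS, N ∩ Set.Ioi a, hN.inter_Ioi a, fun t ht => ?_⟩
  by_cases hat : a ∈ t
  · rw [← insert_erase hat]
    exact hNS _ (mem_powerset.2 (subset_insert_iff.1 ht)) a haN
  · exact (hS t ((subset_insert_iff_of_notMem hat).1 ht)).mono
      (Set.inter_subset_left.trans hNM)

theorem Rejects.exists_forall_notMem (hs : Rejects F ∅ M) (hM : M.Infinite) :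
    ∃ N : Set ℕ, N.Infinite ∧ ∀ t : Finset ℕ, ↑t ⊆ N → t ∉ F := by
  have step :
      ∀ p : {p : Finset ℕ × Set ℕ // p.2.Infinite ∧ ∀ t ⊆ p.1, Rejects F t p.2},
        ∃ q : {p : Finset ℕ × Set ℕ // p.2.Infinite ∧ ∀ t ⊆ p.1, Rejects F t p.2},
          ∃ a ∉ p.1.1, q.1.1 = insert a p.1.1 := by
    intro ⟨⟨S, M⟩, hM, hS⟩
    obtain ⟨a, haS, N, hN, hNS⟩ := exists_insert_forall_subset_rejects hM hS
    exact ⟨⟨⟨insert a S, N⟩, hN, hNS⟩, a, haS, rfl⟩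
  choose next hnext using step
  set p := fun k => next^[k] ⟨⟨∅, M⟩, hM, fun t ht => subset_empty.1 ht ▸ hs⟩
  set S : ℕ → Finset ℕ := fun k => (p k).1.1
  have hS : StrictMono S := strictMono_nat_of_lt_succ fun k => by
    obtain ⟨a, haS, hSa⟩ := hnext (p k)
    simp only [S, p, Function.iterate_succ_apply', hSa]
    exact ssubset_insert haS
  have hS_dir : Directed (· ⊆ ·) fun k => (S k : Set ℕ) :=
    Monotone.directed_le fun _ _ h => coe_subset.2 (hS.monotone h)
  refine ⟨⋃ k, S k, fun hfin => ?_, fun t ht => ?_⟩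
  · obtain ⟨k, hk⟩ :=
      hS_dir.exists_mem_subset_of_finset_subset_biUnion hfin.coe_toFinset.subset
    have : (S (k + 1) : Set ℕ) ⊆ S k :=
      ((Set.subset_iUnion (fun k => (S k : Set ℕ)) (k + 1)).trans
        hfin.coe_toFinset.symm.subset).trans hk
    exact (hS k.lt_succ_self).not_ge (coe_subset.1 this)
  · obtain ⟨k, hk⟩ := hS_dir.exists_mem_subset_of_finset_subset_biUnion ht
    exact ((p k).2.2 t (coe_subset.1 hk)).notMem (p k).2.1

theorem exists_infinite_accepts_or_forall_notMem (F : Set (Finset ℕ)) :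
    ∃ M : Set ℕ, M.Infinite ∧
      (Accepts F ∅ M ∨ ∀ t : Finset ℕ, ↑t ⊆ M → t ∉ F) := by
  obtain ⟨M, -, hM, hacc | hrej⟩ := exists_accepts_or_rejects (F := F) ∅ Set.infinite_univ
  · exact ⟨M, hM, Or.inl hacc⟩
  · obtain ⟨N, hN, hNF⟩ := hrej.exists_forall_notMem hM
    exact ⟨N, hN, Or.inr hNF⟩

end NashWilliams

section Rosenthal

open Finset

variable {X : Type*}

def AlternatesOn (P : ℕ → X → Prop) (s : Finset ℕ) (x : X) : Prop :=
  ∀ a ∈ s, P a x ↔ Even #(s.filter (· < a))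

def IsIndependent (P : ℕ → X → Prop) : Prop :=
  ∀ E F : Finset ℕ, Disjoint E F → ∃ x, (∀ m ∈ E, P m x) ∧ ∀ m ∈ F, ¬ P m x

theorem card_filter_lt_image {φ : ℕ → ℕ} (hφ : StrictMono φ) (J : Finset ℕ) (j : ℕ) :
    #((J.image φ).filter (· < φ j)) = #(J.filter (· < j)) := by
  rw [filter_image, card_image_of_injective _ hφ.injective]
  simp only [hφ.lt_iff_lt]

theorem alternatesOn_image_range {P : ℕ → X → Prop} {x : X} {g : ℕ → ℕ}
    (hg : StrictMono g) (hgx : ∀ i, P (g i) x ↔ Even i) (k : ℕ) :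
    AlternatesOn P ((range k).image g) x := by
  simp only [AlternatesOn, mem_image, mem_range, forall_exists_index, and_imp]
  rintro _ i hi rfl
  rw [card_filter_lt_image hg, hgx, show (range k).filter (· < i) = range i from ?_, card_range]
  ext j
  simp only [mem_filter, mem_range]
  omega

theorem forall_eventually_of_accepts {P : ℕ → X → Prop} {M : Set ℕ}
    (hM : NashWilliams.Accepts {s | ¬ ∃ x, AlternatesOn P s x} ∅ M) {φ : ℕ → ℕ}
    (hφ : StrictMono φ) (hφM : Set.range φ ⊆ M) (x : X) :
    (∀ᶠ m in atTop, P (φ m) x) ∨ ∀ᶠ m in atTop, ¬ P (φ m) x := by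
  by_contra! h
  obtain ⟨g, hg, hgx⟩ := extraction_forall_of_frequently
    (P := fun i m => P (φ m) x ↔ Even i) fun i => by
      by_cases hi : Even i
      · simpa [hi] using h.2
      · simpa [hi] using h.1
  obtain ⟨k, hk⟩ := hM (φ ∘ g) (hφ.comp hg) ((Set.range_comp_subset_range _ _).trans hφM)
  rw [empty_union] at hk
  exact hk ⟨x, alternatesOn_image_range (hφ.comp hg) hgx k⟩

/-- Each block has two elements and begins with `3 * m + 1` iff `m ∈ E`, so in a union of
blocks `3 * m + 1` has even rank iff `m ∈ E`. -/
def block (E : Finset ℕ) (m : ℕ) : Finset ℕ :=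
  if m ∈ E then {3 * m + 1, 3 * m + 2} else {3 * m, 3 * m + 1}

theorem div_three_of_mem_block {E : Finset ℕ} {m a : ℕ} (ha : a ∈ block E m) : a / 3 = m := by
  unfold block at ha
  split_ifs at ha <;> simp only [mem_insert, mem_singleton] at ha <;> omega

theorem three_mul_add_one_mem_block (E : Finset ℕ) (m : ℕ) : 3 * m + 1 ∈ block E m := by
  unfold block
  split_ifs <;> simp

theorem card_block (E : Finset ℕ) (m : ℕ) : #(block E m) = 2 := by
  unfold block
  split_ifs <;> simp

theorem filter_lt_block (E : Finset ℕ) (m : ℕ) :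
    (block E m).filter (· < 3 * m + 1) = if m ∈ E then ∅ else {3 * m} := by
  unfold block
  split_ifs <;> ext a <;> simp <;> omega

theorem filter_lt_biUnion_block {E U : Finset ℕ} {m : ℕ} (hm : m ∈ U) :
    (U.biUnion (block E)).filter (· < 3 * m + 1) =
      (U.filter (· < m)).biUnion (block E) ∪ (block E m).filter (· < 3 * m + 1) := by
  ext a
  simp only [mem_filter, mem_biUnion, mem_union]
  constructor
  · rintro ⟨⟨m', hm', ha⟩, hlt⟩
    have := div_three_of_mem_block ha
    rcases (show m' < m ∨ m' = m by omega) with h | rfl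
    · exact Or.inl ⟨m', ⟨hm', h⟩, ha⟩
    · exact Or.inr ⟨ha, hlt⟩
  · rintro (⟨m', ⟨hm', h⟩, ha⟩ | ⟨ha, hlt⟩)
    · exact ⟨⟨m', hm', ha⟩, by have := div_three_of_mem_block ha; omega⟩
    · exact ⟨⟨m, hm, ha⟩, hlt⟩

theorem even_card_filter_lt_biUnion_block {E U : Finset ℕ} {m : ℕ} (hm : m ∈ U) :
    Even #((U.biUnion (block E)).filter (· < 3 * m + 1)) ↔ m ∈ E := by
  have hdisj : Disjoint ((U.filter (· < m)).biUnion (block E))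
      ((block E m).filter (· < 3 * m + 1)) := by
    simp only [disjoint_left, mem_biUnion, mem_filter]
    rintro a ⟨m', ⟨-, h⟩, ha⟩ ⟨ha', -⟩
    have := div_three_of_mem_block ha
    have := div_three_of_mem_block ha'
    omega
  have hpw : (↑(U.filter (· < m)) : Set ℕ).PairwiseDisjoint (block E) := by
    intro m₁ _ m₂ _ hne
    rw [Function.onFun, disjoint_left]
    intro a h₁ h₂
    exact hne ((div_three_of_mem_block h₁).symm.trans (div_three_of_mem_block h₂))
  rw [filter_lt_biUnion_block hm, card_union_of_disjoint hdisj, card_biUnion hpw,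
    filter_lt_block]
  simp only [card_block, sum_const, smul_eq_mul]
  split_ifs with hmE <;> simp [hmE, parity_simps]

theorem isIndependent_of_forall_alternatesOn {P : ℕ → X → Prop} {φ : ℕ → ℕ}
    (hφ : StrictMono φ) (h : ∀ J : Finset ℕ, ∃ x, AlternatesOn P (J.image φ) x) :
    IsIndependent fun m => P (φ (3 * m + 1)) := by
  intro E F hEF
  obtain ⟨x, hx⟩ := h ((E ∪ F).biUnion (block E))
  have key : ∀ m ∈ E ∪ F, P (φ (3 * m + 1)) x ↔ m ∈ E := fun m hm => by
    rw [hx _ (mem_image_of_mem _ (mem_biUnion.2 ⟨m, hm, three_mul_add_one_mem_block E m⟩)),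
      card_filter_lt_image hφ, even_card_filter_lt_biUnion_block hm]
  exact ⟨x, fun m hm => (key m (mem_union_left _ hm)).2 hm,
    fun m hm hP => disjoint_left.1 hEF ((key m (mem_union_right _ hm)).1 hP) hm⟩

theorem exists_isIndependent_or_eventually_constant (P : ℕ → X → Prop) :
    (∃ ψ : ℕ → ℕ, StrictMono ψ ∧ IsIndependent fun m => P (ψ m)) ∨
    ∃ φ : ℕ → ℕ, StrictMono φ ∧
      ∀ x, (∀ᶠ m in atTop, P (φ m) x) ∨ ∀ᶠ m in atTop, ¬ P (φ m) x := by
  obtain ⟨M, hM, hacc | hnot⟩ :=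
    NashWilliams.exists_infinite_accepts_or_forall_notMem {s | ¬ ∃ x, AlternatesOn P s x}
  · exact Or.inr ⟨_, Nat.nth_strictMono hM, forall_eventually_of_accepts hacc
      (Nat.nth_strictMono hM) (Nat.range_nth_of_infinite hM).subset⟩
  · refine Or.inl ⟨_, (Nat.nth_strictMono hM).comp fun a b h => by omega,
      isIndependent_of_forall_alternatesOn (Nat.nth_strictMono hM) fun J => ?_⟩
    by_contra hJ
    refine hnot (J.image (Nat.nth (· ∈ M))) ?_ hJ
    rw [coe_image]
    exact (Set.image_subset_range _ _).trans (Nat.range_nth_of_infinite hM).subset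

end Rosenthal

theorem stmt13_general {K : Type*}
    (f : ℕ → K → ℝ) (hf : ∀ n x, f n x = 0 ∨ f n x = 1)
    (hind : ¬ ∃ φ : ℕ → ℕ, StrictMono φ ∧ ∀ E F : Finset ℕ, Disjoint E F →
      ∃ x : K, (∀ m ∈ E, f (φ m) x = 1) ∧ (∀ m ∈ F, f (φ m) x = 0)) :
    ∃ φ : ℕ → ℕ, StrictMono φ ∧ ∀ x : K, ∃ L : ℝ,
      Tendsto (fun m => f (φ m) x) atTop (𝓝 L) := by
  rcases exists_isIndependent_or_eventually_constant (fun n x => f n x = 1) with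
    ⟨ψ, hψ, hψ_indep⟩ | ⟨φ, hφ, hφ_const⟩
  · refine absurd ⟨ψ, hψ, fun E F hEF => ?_⟩ hind
    obtain ⟨x, hE, hF⟩ := hψ_indep E F hEF
    exact ⟨x, hE, fun m hm => (hf _ x).resolve_right (hF m hm)⟩
  · refine ⟨φ, hφ, fun x => ?_⟩
    rcases hφ_const x with h | h
    · exact ⟨1, tendsto_const_nhds.congr' (h.mono fun m hm => hm.symm)⟩
    · exact ⟨0, tendsto_const_nhds.congr'
        (h.mono fun m hm => ((hf _ x).resolve_right hm).symm)⟩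

theorem stmt13 {K : Type*} [TopologicalSpace K] [CompactSpace K] [T2Space K]
    (f : ℕ → K → ℝ) (hc : ∀ n, Continuous (f n)) (hf : ∀ n x, f n x = 0 ∨ f n x = 1)
    (D : Set K) (hD : Dense D)
    (hconv : ∀ x ∈ D, ∃ L : ℝ, Tendsto (fun n => f n x) atTop (𝓝 L))
    (hind : ¬ ∃ φ : ℕ → ℕ, StrictMono φ ∧ ∀ E F : Finset ℕ, Disjoint E F →
      ∃ x : K, (∀ m ∈ E, f (φ m) x = 1) ∧ (∀ m ∈ F, f (φ m) x = 0)) :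
    ∃ φ : ℕ → ℕ, StrictMono φ ∧ ∀ x : K, ∃ L : ℝ,
      Tendsto (fun m => f (φ m) x) atTop (𝓝 L) :=
  stmt13_general f hf hind
end
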